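/- arXiv:2004.04896 — 4 statements merged into one kernel-verified Lean document; each statement's English description precedes it below -/
import Mathlib

section
/- Compatibility of guarded 1-sender (broadcast) transitions satisfying the strong guard-compatibility condition: let f : S → S be the receive map with matrix M, sender moving from s₁ to s₁' (so v = e_{s₁}, v' = e_{s₁'}), G ⊆ S the guard, and 𝒢 a family of guards. Assume that for every G' ∈ 𝒢, if s₁' ∈ G' then f(s) ∈ G' for all s ∈ G. Suppose q ⊴ p (q ⪯ p and supp(q) ⊆ G'' ↔ supp(p) ⊆ G'' for all G'' ∈ 𝒢), the transition is enabled from q (e_{s₁} ⪯ q and supp(q) ⊆ G), and q' = M·(q − e_{s₁}) + e_{s₁'}. Then the transition is enabled from p, and the successor p' = M·(p − e_{s₁}) + e_{s₁'} satisfies q' ⊴ p'. -/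
/-!
Write `r ↦ M (r - e_{s₁}) + e_{s₁'}` for the successor map. It is monotone, and the support of a
successor always contains `s₁'` and otherwise consists of `f`-images of the support of its
predecessor. So from a configuration supported in `G`, the successor lies in a guard `G'` exactly
when `s₁' ∈ G'` (this is where strong guard-compatibility enters); that criterion does not depend
on the configuration, hence `q'` and `p'` satisfy the same guards.
-/

namespace BroadcastStep

variable {S : Type*} [Fintype S] [DecidableEq S]

def succ (f : S → S) (s₁ s₁' : S) (r : S → ℕ) : S → ℕ := fun s =>
  (∑ t, (if f t = s then 1 else 0) * (r t - if t = s₁ then 1 else 0)) +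
    if s = s₁' then 1 else 0

variable (f : S → S) (s₁ s₁' : S)

theorem succ_mono {r r' : S → ℕ} (h : ∀ s, r s ≤ r' s) (s : S) :
    succ f s₁ s₁' r s ≤ succ f s₁ s₁' r' s := by
  unfold succ
  gcongr with t _
  exact h t

theorem succ_pos_self (r : S → ℕ) : 0 < succ f s₁ s₁' r s₁' := by
  simp [succ]

theorem exists_pos_of_succ_pos {r : S → ℕ} {s : S} (hs : 0 < succ f s₁ s₁' r s)
    (hne : s ≠ s₁') : ∃ t, f t = s ∧ 0 < r t := by
  simp only [succ, hne, if_false, add_zero] at hs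
  obtain ⟨t, -, ht⟩ := Finset.exists_ne_zero_of_sum_ne_zero hs.ne'
  by_cases hft : f t = s
  · simp only [hft, if_true, one_mul] at ht
    exact ⟨t, hft, (Nat.pos_of_ne_zero ht).trans_le (Nat.sub_le _ _)⟩
  · simp [hft] at ht

theorem support_succ_subset_iff {G G' : Set S} (hcomp : s₁' ∈ G' → ∀ s ∈ G, f s ∈ G')
    {r : S → ℕ} (hr : {s | 0 < r s} ⊆ G) :
    {s | 0 < succ f s₁ s₁' r s} ⊆ G' ↔ s₁' ∈ G' := by
  refine ⟨fun h => h (succ_pos_self f s₁ s₁' r), fun h₁ s hs => ?_⟩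
  by_cases hss : s = s₁'
  · exact hss ▸ h₁
  · obtain ⟨t, rfl, ht⟩ := exists_pos_of_succ_pos f s₁ s₁' hs hss
    exact hcomp h₁ t (hr ht)

end BroadcastStep

open BroadcastStep in
/-- Compatibility of guarded broadcast (1-sender) transitions satisfying the
strong guard-compatibility condition: if `q ⊴ p` and the transition is enabled
from `q`, then it is enabled from `p` and the successors satisfy `q' ⊴ p'`. -/
theorem stmt_9 (S : Type*) [Fintype S] [DecidableEq S]
    (f : S → S) (s₁ s₁' : S) (G : Set S) (𝒢 : Set (Set S)) (hG : G ∈ 𝒢)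
    (q p : S → ℕ)
    -- strong guard-compatibility (C1): if the sender moves into a guard,
    -- then every receiver in `G` moves into that guard
    (hcomp : ∀ G' ∈ 𝒢, s₁' ∈ G' → ∀ s ∈ G, f s ∈ G')
    -- q ⊴ p
    (hle : ∀ s, q s ≤ p s)
    (hguards : ∀ G'' ∈ 𝒢, ({s : S | 0 < q s} ⊆ G'' ↔ {s : S | 0 < p s} ⊆ G''))
    -- the transition is enabled from q
    (hsend : (if s₁ = s₁ then 1 else 0) ≤ q s₁)
    (henab : {s : S | 0 < q s} ⊆ G)
    -- successors
    (q' p' : S → ℕ)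
    (hq' : ∀ s, q' s = (∑ t, (if f t = s then 1 else 0) *
              (q t - (if t = s₁ then 1 else 0))) + (if s = s₁' then 1 else 0))
    (hp' : ∀ s, p' s = (∑ t, (if f t = s then 1 else 0) *
              (p t - (if t = s₁ then 1 else 0))) + (if s = s₁' then 1 else 0)) :
    -- the transition is enabled from p, and q' ⊴ p'
    (1 ≤ p s₁) ∧ ({s : S | 0 < p s} ⊆ G) ∧
    (∀ s, q' s ≤ p' s) ∧
    (∀ G' ∈ 𝒢, ({s : S | 0 < q' s} ⊆ G' ↔ {s : S | 0 < p' s} ⊆ G')) := by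
  obtain rfl : q' = succ f s₁ s₁' q := funext hq'
  obtain rfl : p' = succ f s₁ s₁' p := funext hp'
  have hpG : {s | 0 < p s} ⊆ G := (hguards G hG).mp henab
  refine ⟨(by simpa using hsend : 1 ≤ q s₁).trans (hle s₁), hpG, succ_mono f s₁ s₁' hle,
    fun G' hG' => ?_⟩
  rw [support_succ_subset_iff f s₁ s₁' (hcomp G' hG') henab,
    support_succ_subset_iff f s₁ s₁' (hcomp G' hG') hpG]
end

section
/- Predecessor computation for k-sender transitions preserves upward-closedness modulo the enabling condition: let M be an S × S matrix with unit-vector columns arising from a bijective-free receive map f, and v, v' ∈ ℕ^S. If C ⊆ ℕ^S is upward closed, then the set Pred(C) = {q | v ⪯ q ∧ M·(q − v) + v' ∈ C} is upward closed with respect to ⪯. -/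
open Matrix

theorem Matrix.monotone_mulVec_tsub_add {S : Type*} [Fintype S] (M : Matrix S S ℕ)
    (v v' : S → ℕ) : Monotone fun q : S → ℕ => M *ᵥ (q - v) + v' := by
  intro q p hqp s
  simp only [Pi.add_apply, mulVec, dotProduct, Pi.sub_apply]
  gcongr with t
  exact hqp t

theorem Matrix.isUpperSet_predecessors {S : Type*} [Fintype S] (M : Matrix S S ℕ)
    (v v' : S → ℕ) {C : Set (S → ℕ)} (hC : IsUpperSet C) :
    IsUpperSet {q | v ≤ q ∧ M *ᵥ (q - v) + v' ∈ C} :=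
  (isUpperSet_Ici v).inter (hC.preimage (M.monotone_mulVec_tsub_add v v'))

/-- Predecessor computation for k-sender transitions preserves
upward-closedness: if `C` is upward closed then so is
`Pred(C) = {q | v ⪯ q ∧ M·(q − v) + v' ∈ C}`. -/
theorem stmt_12 (S : Type*) [Fintype S] [DecidableEq S] (f : S → S)
    (v v' : S → ℕ) (C : Set (S → ℕ))
    (hC : ∀ q ∈ C, ∀ p : S → ℕ, (∀ s, q s ≤ p s) → p ∈ C) :
    ∀ q ∈ {q : S → ℕ | (∀ s, v s ≤ q s) ∧
        (fun s => (∑ t, (if f t = s then 1 else 0) * (q t - v t)) + v' s) ∈ C},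
      ∀ p : S → ℕ, (∀ s, q s ≤ p s) →
        p ∈ {q : S → ℕ | (∀ s, v s ≤ q s) ∧
        (fun s => (∑ t, (if f t = s then 1 else 0) * (q t - v t)) + v' s) ∈ C} :=
  fun _ hq _ hqp =>
    (Matrix.of fun s t => if f t = s then 1 else 0).isUpperSet_predecessors v v'
      (fun _ _ hle hmem => hC _ hmem _ hle) hqp hq
end

section
/- Simulation monotonicity for unguarded GSP systems (system-size monotonicity): for an unguarded GSP with k-sender transitions only, if state q' is reachable from initial state n·e_{s₀} in the system of size n, then for every n' ≥ n there exists a reachable state p' in the system of size n' with q' ⪯ p'. -/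
/-!
Firing an action only subtracts its senders `v a` and maps the remaining processes through `M a`,
which is monotone in the current state. So any run of the size-`n` system is shadowed by a run of
the size-`n'` system that fires the same actions: the `n' - n` extra processes stay in the
configuration and are merely moved around as receivers, keeping it componentwise above.
-/

theorem Relation.ReflTransGen.exists_le_of_upward_compatible {α : Type*} [Preorder α]
    {r : α → α → Prop} (hcompat : ∀ x y x', r x y → x ≤ x' → ∃ y', r x' y' ∧ y ≤ y')
    {a b c : α} (hab : Relation.ReflTransGen r a c) (hle : a ≤ b) :
    ∃ d, Relation.ReflTransGen r b d ∧ c ≤ d := by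
  induction hab with
  | refl => exact ⟨b, .refl, hle⟩
  | tail _ hstep ih =>
    obtain ⟨d, hbd, hcd⟩ := ih
    obtain ⟨e, hde, hle'⟩ := hcompat _ _ _ hstep hcd
    exact ⟨e, hbd.tail hde, hle'⟩

section Firing

variable {S : Type*} [Fintype S]

def fire (M : S → S → ℕ) (v v' : S → ℕ) (q : S → ℕ) : S → ℕ :=
  fun s => (∑ t, M s t * (q t - v t)) + v' s

theorem monotone_fire (M : S → S → ℕ) (v v' : S → ℕ) : Monotone (fire M v v') := by
  intro q p hqp s
  unfold fire
  gcongr with t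
  exact hqp t

end Firing

theorem monotone_ite_eq {S α : Type*} [DecidableEq S] [Preorder α] [Zero α] (s₀ : S) :
    Monotone fun x : α => fun s => if s = s₀ then x else 0 := by
  intro x y hxy s
  dsimp only
  split_ifs
  exacts [hxy, le_rfl]

theorem stmt_14_general (S : Type*) [Fintype S] [DecidableEq S] (s₀ : S)
    (A : Type*) (M : A → S → S → ℕ) (v v' : A → S → ℕ)
    (step : (S → ℕ) → (S → ℕ) → Prop)
    (hstep : ∀ q q', step q q' ↔ ∃ a, (∀ s, v a s ≤ q s) ∧
        q' = fun s => (∑ t, M a s t * (q t - v a t)) + v' a s)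
    (n : ℕ) (q' : S → ℕ)
    (hreach : Relation.ReflTransGen step (fun s => if s = s₀ then n else 0) q') :
    ∀ n' ≥ n, ∃ p' : S → ℕ,
      Relation.ReflTransGen step (fun s => if s = s₀ then n' else 0) p' ∧
      ∀ s, q' s ≤ p' s := by
  intro n' hn'
  have hcompat : ∀ q q' p, step q q' → q ≤ p → ∃ p', step p p' ∧ q' ≤ p' := by
    intro q q' p hq hqp
    obtain ⟨a, hen, rfl⟩ := (hstep q q').1 hq
    exact ⟨fire (M a) (v a) (v' a) p,
      (hstep _ _).2 ⟨a, fun s => (hen s).trans (hqp s), rfl⟩, monotone_fire _ _ _ hqp⟩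
  exact hreach.exists_le_of_upward_compatible hcompat (monotone_ite_eq s₀ hn')

/-- System-size monotonicity for unguarded GSPs with k-sender transitions
only: if `q'` is reachable from the size-`n` initial state, then for every
`n' ≥ n` some reachable state `p'` of the size-`n'` system satisfies
`q' ⪯ p'`. -/
theorem stmt_14 (S : Type*) [Fintype S] [DecidableEq S] (s₀ : S)
    (A : Type*) (M : A → S → S → ℕ) (v v' : A → S → ℕ)
    (hcol : ∀ a, ∀ t : S, ∃! s : S, M a s t = 1 ∧ ∀ s' ≠ s, M a s' t = 0)
    (hsum : ∀ a, (∑ s, v a s) = ∑ s, v' a s)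
    (step : (S → ℕ) → (S → ℕ) → Prop)
    (hstep : ∀ q q', step q q' ↔ ∃ a, (∀ s, v a s ≤ q s) ∧
        q' = fun s => (∑ t, M a s t * (q t - v a t)) + v' a s)
    (n : ℕ) (q' : S → ℕ)
    (hreach : Relation.ReflTransGen step (fun s => if s = s₀ then n else 0) q') :
    ∀ n' ≥ n, ∃ p' : S → ℕ,
      Relation.ReflTransGen step (fun s => if s = s₀ then n' else 0) p' ∧
      ∀ s, q' s ≤ p' s :=
  stmt_14_general S s₀ A M v v' step hstep n q' hreach
end

section
/- Cutoff soundness for internal-and-negotiation-only well-behaved protocols (downward direction): in a system whose global transitions either move exactly one process along a local transition (internal) or move every process s ↦ f(s) for a common map f (negotiation), if from the size-n initial state n·e_{s₀} a state q with q(s) ≥ m is reachable, and m ≤ n, then from the size-m initial state m·e_{s₀} a state q̃ with q̃(s) ≥ m is reachable, provided all guards are trivial (no guard restricts transitions). Formally: projecting a run onto any chosen subset of m processes whose final local state is s yields a valid run of the size-m system reaching m processes in s. -/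
/-!
Subconfigurations of reachable configurations are reachable: if `c` is reachable from `n·e_{s₀}`
and `q ≤ c`, then `q` is reachable from `|q|·e_{s₀}`. Going backwards along the run, a
subconfiguration of the target of a step lifts to a subconfiguration of its source. For an
internal move `t → t'` either the moved process is not among the kept ones (nothing to replay) or
it is, and the move is replayed from `t`; for a negotiation along `f`, a subconfiguration of the
pushforward is the pushforward of a subconfiguration, chosen fiber by fiber. Apply this to
`m·e_s ≤ q`.
-/

open Finset Relation

lemma Finset.exists_le_sum_eq_of_le_sum {ι : Type*} [DecidableEq ι] {s : Finset ι} {b : ι → ℕ}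
    {k : ℕ} (hk : k ≤ ∑ i ∈ s, b i) : ∃ g ≤ b, ∑ i ∈ s, g i = k := by
  induction k with
  | zero => exact ⟨0, fun _ => Nat.zero_le _, by simp⟩
  | succ k ih =>
    obtain ⟨g, hgb, hgk⟩ := ih (by omega)
    obtain ⟨i, hi, hgi⟩ := exists_lt_of_sum_lt (hgk ▸ hk : ∑ i ∈ s, g i < ∑ i ∈ s, b i)
    refine ⟨g + Pi.single i 1, fun j => ?_, ?_⟩
    · rcases eq_or_ne j i with rfl | hj
      · simpa using hgi
      · simpa [hj] using hgb j
    · simp [sum_add_distrib, hgk, hi]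

lemma Pi.single_le_iff {ι α : Type*} [DecidableEq ι] [AddMonoid α] [PartialOrder α]
    [CanonicallyOrderedAdd α] {f : ι → α} {i : ι} {a : α} :
    Pi.single i a ≤ f ↔ a ≤ f i := by
  refine ⟨fun h => by simpa using h i, fun h j => ?_⟩
  rcases eq_or_ne j i with rfl | hj <;> simp [*]

namespace Population

variable {S : Type*} [Fintype S] [DecidableEq S]

def pushforward (f : S → S) (q : S → ℕ) : S → ℕ :=
  fun u => ∑ t ∈ univ.filter (fun t => f t = u), q t

lemma sum_pushforward (f : S → S) (q : S → ℕ) : ∑ u, pushforward f q u = ∑ u, q u :=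
  sum_fiberwise univ f q

lemma exists_le_pushforward_eq {f : S → S} {b qt : S → ℕ} (h : qt ≤ pushforward f b) :
    ∃ qs ≤ b, pushforward f qs = qt := by
  choose g hgb hg using fun u => exists_le_sum_eq_of_le_sum (h u)
  refine ⟨fun t => g (f t) t, fun t => hgb (f t) t, funext fun u => ?_⟩
  rw [pushforward, ← hg u]
  refine sum_congr rfl fun t ht => ?_
  rw [(mem_filter.1 ht).2]

inductive Step (T : Set (S × S)) (F : Set (S → S)) : (S → ℕ) → (S → ℕ) → Prop
  | internal {q : S → ℕ} {t t' : S} : (t, t') ∈ T → 1 ≤ q t →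
      Step T F q (q - Pi.single t 1 + Pi.single t' 1)
  | negotiation {q : S → ℕ} {f : S → S} : f ∈ F → Step T F q (pushforward f q)

variable {T : Set (S × S)} {F : Set (S → S)}

lemma Step.sum_eq {q q' : S → ℕ} (h : Step T F q q') : ∑ u, q' u = ∑ u, q u := by
  cases h with
  | @internal t t' _ ht =>
    have hq : q - Pi.single t 1 + Pi.single t 1 = q :=
      tsub_add_cancel_of_le (Pi.single_le_iff.2 ht)
    conv_rhs => rw [← hq]
    simp only [Pi.add_apply, sum_add_distrib, sum_pi_single', mem_univ, if_true]
  | negotiation => exact sum_pushforward _ _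

lemma sum_eq_of_reflTransGen {q q' : S → ℕ} (h : ReflTransGen (Step T F) q q') :
    ∑ u, q' u = ∑ u, q u := by
  induction h with
  | refl => rfl
  | tail _ hstep ih => rw [hstep.sum_eq, ih]

lemma Step.exists_le_reflTransGen {b c qt : S → ℕ} (h : Step T F b c) (hqt : qt ≤ c) :
    ∃ qs ≤ b, ReflTransGen (Step T F) qs qt := by
  cases h with
  | @internal t t' htT ht =>
    have hc : ∀ u, qt u ≤ b u - (if u = t then 1 else 0) + (if u = t' then 1 else 0) :=
      fun u => by simpa [Pi.single_apply] using hqt u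
    by_cases hlt : qt t' ≤ b t'
    · refine ⟨qt, fun u => ?_, .refl⟩
      have := hc u
      show qt u ≤ b u
      split_ifs at this <;> subst_vars <;> omega
    · have hbt' := hc t'
      refine ⟨qt - Pi.single t' 1 + Pi.single t 1, fun u => ?_, .single ?_⟩
      · have := hc u
        simp only [Pi.add_apply, Pi.sub_apply, Pi.single_apply]
        split_ifs at this ⊢ <;> subst_vars <;> omega
      · have hqt' : Pi.single t' 1 ≤ qt := Pi.single_le_iff.2 (by omega)
        have hback :
            qt - Pi.single t' 1 + Pi.single t 1 - Pi.single t 1 + Pi.single t' 1 = qt := by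
          rw [add_tsub_cancel_right, tsub_add_cancel_of_le hqt']
        have := Step.internal (F := F) (q := qt - Pi.single t' 1 + Pi.single t 1) htT (by simp)
        rwa [hback] at this
  | negotiation hf =>
    obtain ⟨qs, hqs, rfl⟩ := exists_le_pushforward_eq hqt
    exact ⟨qs, hqs, .single (.negotiation hf)⟩

lemma step_iff {q q' : S → ℕ} : Step T F q q' ↔
    ((∃ tr ∈ T, 1 ≤ q tr.1 ∧
        q' = fun u => q u - (if u = tr.1 then 1 else 0) + (if u = tr.2 then 1 else 0)) ∨
      ∃ f ∈ F, q' = pushforward f q) := by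
  have hmove : ∀ t t' : S, q - Pi.single t 1 + Pi.single t' 1 =
      fun u => q u - (if u = t then 1 else 0) + (if u = t' then 1 else 0) := fun t t' => by
    ext u; simp [Pi.single_apply]
  constructor
  · rintro (⟨htT, ht⟩ | ⟨hf⟩)
    exacts [.inl ⟨_, htT, ht, hmove _ _⟩, .inr ⟨_, hf, rfl⟩]
  · rintro (⟨⟨t, t'⟩, htT, ht, rfl⟩ | ⟨f, hf, rfl⟩)
    exacts [hmove t t' ▸ .internal htT ht, .negotiation hf]

theorem reflTransGen_single_sum_of_le {s₀ : S} {n : ℕ} {q qt : S → ℕ}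
    (h : ReflTransGen (Step T F) (Pi.single s₀ n) q) (hqt : qt ≤ q) :
    ReflTransGen (Step T F) (Pi.single s₀ (∑ u, qt u)) qt := by
  induction h generalizing qt with
  | refl =>
    have hqt : qt = Pi.single s₀ (qt s₀) := funext fun u => by
      rcases eq_or_ne u s₀ with rfl | hu
      · simp
      · simpa [hu] using hqt u
    have hsum : ∑ u, qt u = qt s₀ := by rw [hqt]; simp
    rw [hsum, ← hqt]
  | tail _ hstep ih =>
    obtain ⟨qs, hqs, hrun⟩ := hstep.exists_le_reflTransGen hqt
    rw [sum_eq_of_reflTransGen hrun]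
    exact (ih hqs).trans hrun

end Population

open Population in
theorem stmt_19_general (S : Type*) [Fintype S] [DecidableEq S] (s₀ s : S)
    (T : Set (S × S)) (F : Set (S → S))
    (step : (S → ℕ) → (S → ℕ) → Prop)
    (hstep : ∀ q q', step q q' ↔
      ((∃ tr ∈ T, 1 ≤ q tr.1 ∧
          q' = fun u => q u - (if u = tr.1 then 1 else 0)
                          + (if u = tr.2 then 1 else 0)) ∨
       (∃ f ∈ F, q' = fun u => ∑ t ∈ Finset.univ.filter (fun t => f t = u), q t)))
    (n m : ℕ) (q : S → ℕ)
    (hreach : Relation.ReflTransGen step (fun u => if u = s₀ then n else 0) q)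
    (hq : m ≤ q s) :
    ∃ q' : S → ℕ,
      Relation.ReflTransGen step (fun u => if u = s₀ then m else 0) q' ∧
      m ≤ q' s := by
  obtain rfl : step = Step T F := funext₂ fun q q' => propext ((hstep q q').trans step_iff.symm)
  have hsingle : ∀ k : ℕ, (fun u => if u = s₀ then k else 0) = Pi.single s₀ k := fun k => by
    ext u; simp [Pi.single_apply]
  rw [hsingle] at hreach ⊢
  refine ⟨Pi.single s m, ?_, by simp⟩
  simpa using reflTransGen_single_sum_of_le hreach (Pi.single_le_iff.2 hq)

/-- Cutoff soundness (downward direction) for unguarded systems with only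
internal transitions and negotiations: if the size-`n` system reaches a state
with at least `m` processes in `s` and `m ≤ n`, then the size-`m` system
reaches a state with at least `m` processes in `s`. -/
theorem stmt_19 (S : Type*) [Fintype S] [DecidableEq S] (s₀ s : S)
    (T : Set (S × S)) (F : Set (S → S))
    (step : (S → ℕ) → (S → ℕ) → Prop)
    (hstep : ∀ q q', step q q' ↔
      ((∃ tr ∈ T, 1 ≤ q tr.1 ∧
          q' = fun u => q u - (if u = tr.1 then 1 else 0)
                          + (if u = tr.2 then 1 else 0)) ∨
       (∃ f ∈ F, q' = fun u => ∑ t ∈ Finset.univ.filter (fun t => f t = u), q t)))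
    (n m : ℕ) (hmn : m ≤ n) (q : S → ℕ)
    (hreach : Relation.ReflTransGen step (fun u => if u = s₀ then n else 0) q)
    (hq : m ≤ q s) :
    ∃ q' : S → ℕ,
      Relation.ReflTransGen step (fun u => if u = s₀ then m else 0) q' ∧
      m ≤ q' s :=
  stmt_19_general S s₀ s T F step hstep n m q hreach hq
end
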